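/- arXiv:2004.06627 — 2 statements merged into one kernel-verified Lean document; each statement's English description precedes it below -/
import Mathlib

section
/- Let p > 0 be the share price, 0 ≤ C < 1 the proportional trading cost, ε > 0 the assumed maximum relative price variation, v the current cash value, n ∈ ℤ the current number of shares, and set Δ = -v - n·p·(1+ε)·(1+C). Define the lower bound Q̲ = Δ / (p·ε·(1+C)) if Δ ≥ 0 and Q̲ = Δ / (p·(2C + ε·(1+C))) if Δ < 0. Then for every Q ∈ ℝ, the solvency constraint v - Q·p - C·|Q|·p ≥ -(n+Q)·p·(1+C)·(1+ε) holds if and only if Q ≥ Q̲. -/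
/-- For price `p > 0`, cost `0 ≤ C < 1`, maximum relative price
variation `ε > 0`, cash `v`, shares `n : ℤ`, with `Δ = -v - n*p*(1+ε)*(1+C)` and
lower bound `Q̲ = Δ / (p*ε*(1+C))` if `Δ ≥ 0`, `Q̲ = Δ / (p*(2C + ε*(1+C)))`
otherwise: for every `Q`, the solvency constraint
`v - Q*p - C*|Q|*p ≥ -(n+Q)*p*(1+C)*(1+ε)` holds iff `Q ≥ Q̲`. -/
theorem lower_bound_action_space
    (p C ε v : ℝ) (n : ℤ) (hp : 0 < p) (hC0 : 0 ≤ C) (hC1 : C < 1) (hε : 0 < ε) :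
    ∀ Q : ℝ,
      v - Q * p - C * |Q| * p ≥ -((n : ℝ) + Q) * p * (1 + C) * (1 + ε) ↔
        Q ≥ (if 0 ≤ -v - (n : ℝ) * p * (1 + ε) * (1 + C) then
              (-v - (n : ℝ) * p * (1 + ε) * (1 + C)) / (p * ε * (1 + C))
            else
              (-v - (n : ℝ) * p * (1 + ε) * (1 + C)) / (p * (2 * C + ε * (1 + C)))) := by
  intro Q
  have hpe : 0 < p * ε * (1 + C) := by positivity
  have h2 : 0 < p * (2 * C + ε * (1 + C)) := by
    have : 0 < 2 * C + ε * (1 + C) := by nlinarith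
    positivity
  split_ifs with hd
  · constructor
    · intro h
      rcases le_or_gt 0 Q with hQ | hQ
      · rw [abs_of_nonneg hQ] at h
        rw [ge_iff_le, div_le_iff₀ hpe]
        nlinarith
      · rw [abs_of_neg hQ] at h
        exfalso; nlinarith
    · intro h
      have hQ0 : 0 ≤ Q := le_trans (div_nonneg hd hpe.le) h
      rw [abs_of_nonneg hQ0]
      rw [ge_iff_le, div_le_iff₀ hpe] at h
      nlinarith
  · push_neg at hd
    constructor
    · intro h
      rcases le_or_gt 0 Q with hQ | hQ
      · exact le_trans (le_of_lt (div_neg_of_neg_of_pos hd h2)) hQ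
      · rw [abs_of_neg hQ] at h
        rw [ge_iff_le, div_le_iff₀ h2]
        nlinarith
    · intro h
      rcases le_or_gt 0 Q with hQ | hQ
      · rw [abs_of_nonneg hQ]; nlinarith
      · rw [abs_of_neg hQ]
        rw [ge_iff_le, div_le_iff₀ h2] at h
        nlinarith
end

section
/- Let p > 0 be the share price, 0 ≤ C < 1 the proportional trading cost, ε > 0 the assumed maximum relative price variation, v ≥ 0 the current cash value, and n ∈ ℤ the current number of shares, and assume the solvency condition v ≥ -n·p·(1+ε)·(1+C) holds. Then the long action Q_Long = ⌊v / (p·(1+C))⌋ belongs to the admissible action space: it satisfies both the nonnegative-cash constraint v - Q_Long·p - C·|Q_Long|·p ≥ 0 and the solvency constraint v - Q_Long·p - C·|Q_Long|·p ≥ -(n + Q_Long)·p·(1+C)·(1+ε). -/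
/-- For price `p > 0`, cost `0 ≤ C < 1`, `ε > 0`, cash `v ≥ 0`,
shares `n : ℤ`, assuming the solvency condition `v ≥ -n*p*(1+ε)*(1+C)`, the long
action `Q_Long = ⌊v / (p*(1+C))⌋` satisfies both the nonnegative-cash constraint
and the solvency constraint. -/
theorem long_action_admissible
    (p C ε v : ℝ) (n : ℤ) (hp : 0 < p) (hC0 : 0 ≤ C) (hC1 : C < 1) (hε : 0 < ε)
    (hv : 0 ≤ v) (hsolv : v ≥ -(n : ℝ) * p * (1 + ε) * (1 + C)) :
    0 ≤ v - (⌊v / (p * (1 + C))⌋ : ℝ) * p - C * |(⌊v / (p * (1 + C))⌋ : ℝ)| * p ∧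
      v - (⌊v / (p * (1 + C))⌋ : ℝ) * p - C * |(⌊v / (p * (1 + C))⌋ : ℝ)| * p ≥
        -((n : ℝ) + (⌊v / (p * (1 + C))⌋ : ℝ)) * p * (1 + C) * (1 + ε) := by
  have hden : 0 < p * (1 + C) := by positivity
  set Q : ℝ := (⌊v / (p * (1 + C))⌋ : ℝ) with hQ
  have hQ0 : 0 ≤ Q := by
    have : (0 : ℤ) ≤ ⌊v / (p * (1 + C))⌋ :=
      Int.floor_nonneg.2 (div_nonneg hv hden.le)
    rw [hQ]; exact_mod_cast this
  have habs : |Q| = Q := abs_of_nonneg hQ0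
  have hle : Q ≤ v / (p * (1 + C)) := Int.floor_le _
  have hle' : Q * (p * (1 + C)) ≤ v := by
    calc Q * (p * (1 + C)) ≤ v / (p * (1 + C)) * (p * (1 + C)) := by
          exact mul_le_mul_of_nonneg_right hle hden.le
      _ = v := div_mul_cancel₀ _ hden.ne'
  constructor
  · rw [habs]; nlinarith
  · rw [habs]; nlinarith [mul_nonneg (mul_nonneg hQ0 hden.le) hε.le]
end
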